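/- Let p : I → (0,∞) with Σ_{i∈I} p(i) = 1, let n : I → ℕ be a table of counts with total N = Σ_{i∈I} n(i), and define the marginal counts n(i_E) = Σ_{j∈I : j_E = i_E} n(j). Then the multinomial likelihood kernel has the exponential-family form ∏_{i∈I} p(i)^{n(i)} = exp{ Σ_{∅≠E⊆V} Σ_{i_E∈I_E*} n(i_E) θ_E(i_E) − N · log(1 + Σ_{∅≠E⊆V} Σ_{i_E∈I_E*} exp(Σ_{∅≠F⊆E} θ_F(i_F))) }. -/

import Mathlib

open Finset

/-- The cell equal to `i` on `F` and to the baseline `b` off `F`. -/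
def cellOn {V : Type} [DecidableEq V] {I : V → Type} (b : ∀ γ, I γ)
    (F : Finset V) (i : ∀ γ, I γ) : ∀ γ, I γ :=
  fun γ => if γ ∈ F then i γ else b γ

/-- The support of a cell: the set of coordinates that are off baseline. -/
def cellSupport {V : Type} [Fintype V] [DecidableEq V] {I : V → Type}
    [∀ γ, DecidableEq (I γ)] (b : ∀ γ, I γ) (j : ∀ γ, I γ) : Finset V :=
  Finset.univ.filter (fun γ => j γ ≠ b γ)

/-- The log-linear interaction parameter `θ_E(i_E)` under baseline constraints. -/
noncomputable def theta {V : Type} [DecidableEq V] {I : V → Type} (b : ∀ γ, I γ)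
    (p : (∀ γ, I γ) → ℝ) (E : Finset V) (i : ∀ γ, I γ) : ℝ :=
  ∑ F ∈ E.powerset, (-1 : ℝ) ^ (E \ F).card * Real.log (p (cellOn b F i))

/-!
By Möbius inversion on the subset lattice, `Σ_{F ⊆ E} θ_F(i) = log p(i_E, i*_{E^c})`. For
`E = supp i` this gives `exp (Σ_{∅ ≠ F ⊆ E} θ_F(i)) = p(i) / p(i*)`, so the normalizer
`1 + Σ …` equals `1 / p(i*)` because `p` sums to one. In the canonical term, exchange sums: a
cell `g` is counted in the marginal of exactly the cells `j` that agree with `g` on `supp j`,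
namely `j = (g_E, i*_{E^c})` for `E ⊆ supp g`, so it collects `n(g) (log p(g) - log p(i*))`.
The terms `N log p(i*)` cancel, leaving `Σ_g n(g) log p(g)`.
-/

theorem Finset.sum_Icc_neg_one_pow_card_sdiff {α R : Type*} [DecidableEq α] [Ring R]
    {G E : Finset α} (h : G ⊆ E) :
    ∑ F ∈ Icc G E, (-1 : R) ^ #(F \ G) = if G = E then 1 else 0 := by
  have hdisj {H : Finset α} (hH : H ∈ (E \ G).powerset) : Disjoint G H :=
    (disjoint_of_subset_left (mem_powerset.1 hH) sdiff_disjoint).symm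
  have hinj : Set.InjOn (G ∪ ·) (E \ G).powerset := fun H₁ h₁ H₂ h₂ hH => by
    simpa [union_sdiff_cancel_left (hdisj h₁), union_sdiff_cancel_left (hdisj h₂)] using
      congrArg (· \ G) hH
  rw [Icc_eq_image_powerset h, sum_image hinj,
    sum_congr rfl fun H hH => by rw [union_sdiff_cancel_left (hdisj hH)]]
  have := congrArg (Int.cast : ℤ → R) (sum_powerset_neg_one_pow_card (x := E \ G))
  push_cast at this
  rw [this]
  exact if_congr (sdiff_eq_empty_iff_subset.trans ⟨h.antisymm, fun hGE => hGE.ge⟩) rfl rfl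

theorem Finset.sum_powerset_sum_powerset_neg_one_pow_mul {α R : Type*} [DecidableEq α]
    [CommRing R] (f : Finset α → R) (E : Finset α) :
    ∑ F ∈ E.powerset, ∑ G ∈ F.powerset, (-1 : R) ^ #(F \ G) * f G = f E := by
  rw [sum_comm' (t' := E.powerset) (s' := fun G => Icc G E) fun F G => by
    simp only [mem_powerset, mem_Icc]
    exact ⟨fun ⟨hF, hG⟩ => ⟨⟨hG, hF⟩, hG.trans hF⟩, fun ⟨⟨hG, hF⟩, _⟩ => ⟨hF, hG⟩⟩]
  simp_rw [← sum_mul]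
  rw [sum_congr rfl fun G hG => by rw [sum_Icc_neg_one_pow_card_sdiff (mem_powerset.1 hG)]]
  simp [ite_mul]

section Cells

variable {V : Type} [DecidableEq V] {I : V → Type} (b : ∀ γ, I γ)

@[simp]
lemma cellOn_empty (i : ∀ γ, I γ) : cellOn b ∅ i = b := by
  funext γ; simp [cellOn]

lemma cellOn_cellOn {G E : Finset V} (h : G ⊆ E) (i : ∀ γ, I γ) :
    cellOn b G (cellOn b E i) = cellOn b G i := by
  funext γ
  by_cases hγ : γ ∈ G <;> simp [cellOn, hγ, h _]

lemma theta_empty (p : (∀ γ, I γ) → ℝ) (i : ∀ γ, I γ) : theta b p ∅ i = Real.log (p b) := by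
  simp [theta]

lemma theta_cellOn (p : (∀ γ, I γ) → ℝ) {F E : Finset V} (h : F ⊆ E) (i : ∀ γ, I γ) :
    theta b p F (cellOn b E i) = theta b p F i :=
  sum_congr rfl fun G hG => by rw [cellOn_cellOn b ((mem_powerset.1 hG).trans h)]

lemma sum_powerset_theta (p : (∀ γ, I γ) → ℝ) (E : Finset V) (i : ∀ γ, I γ) :
    ∑ F ∈ E.powerset, theta b p F i = Real.log (p (cellOn b E i)) :=
  sum_powerset_sum_powerset_neg_one_pow_mul (fun G => Real.log (p (cellOn b G i))) E

variable [Fintype V] [∀ γ, DecidableEq (I γ)]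

@[simp]
lemma mem_cellSupport {j : ∀ γ, I γ} {γ : V} : γ ∈ cellSupport b j ↔ j γ ≠ b γ := by
  simp [cellSupport]

lemma cellSupport_eq_empty_iff {j : ∀ γ, I γ} : cellSupport b j = ∅ ↔ j = b := by
  simp [eq_empty_iff_forall_notMem, funext_iff]

lemma cellOn_cellSupport (i : ∀ γ, I γ) : cellOn b (cellSupport b i) i = i := by
  funext γ
  by_cases hγ : i γ = b γ <;> simp [cellOn, hγ]

lemma cellSupport_cellOn {E : Finset V} {i : ∀ γ, I γ} (h : E ⊆ cellSupport b i) :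
    cellSupport b (cellOn b E i) = E := by
  ext γ
  by_cases hγ : γ ∈ E
  · simpa [cellOn, hγ] using h hγ
  · simp [cellOn, hγ]

lemma sum_nonempty_theta_cellSupport (p : (∀ γ, I γ) → ℝ) (i : ∀ γ, I γ) :
    ∑ F ∈ (cellSupport b i).powerset.filter (· ≠ ∅), theta b p F i
      = Real.log (p i) - Real.log (p b) := by
  have h := sum_powerset_theta b p (cellSupport b i) i
  rw [cellOn_cellSupport, ← add_sum_erase _ _ (empty_mem_powerset _), theta_empty] at h
  rw [filter_ne', ← h]
  ring

variable [∀ γ, Fintype (I γ)]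

lemma filter_agree_eq_image_cellOn (i : ∀ γ, I γ) :
    univ.filter (fun j : ∀ γ, I γ => ∀ γ ∈ cellSupport b j, i γ = j γ)
      = (cellSupport b i).powerset.image (cellOn b · i) := by
  ext j
  simp only [mem_filter, mem_univ, true_and, mem_image, mem_powerset]
  constructor
  · intro h
    refine ⟨cellSupport b j, fun γ hγ => ?_, ?_⟩
    · rw [mem_cellSupport, h γ hγ]; exact (mem_cellSupport b).1 hγ
    · conv_rhs => rw [← cellOn_cellSupport b j]
      funext γ
      by_cases hγ : γ ∈ cellSupport b j <;> simp [cellOn, hγ, h γ]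
  · rintro ⟨E, hE, rfl⟩ γ hγ
    rw [cellSupport_cellOn b hE] at hγ
    simp [cellOn, hγ]

lemma sum_theta_cellSupport_of_agree (p : (∀ γ, I γ) → ℝ) (i : ∀ γ, I γ) :
    ∑ j ∈ univ.filter (fun j : ∀ γ, I γ => ∀ γ ∈ cellSupport b j, i γ = j γ),
      theta b p (cellSupport b j) j = Real.log (p i) := by
  have hinj : Set.InjOn (cellOn b · i) (cellSupport b i).powerset := fun E hE F hF h => by
    simpa [cellSupport_cellOn b (mem_powerset.1 hE), cellSupport_cellOn b (mem_powerset.1 hF)]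
      using congrArg (cellSupport b) h
  rw [filter_agree_eq_image_cellOn, sum_image hinj, ← cellOn_cellSupport b i,
    ← sum_powerset_theta, cellOn_cellSupport]
  refine sum_congr rfl fun E hE => ?_
  rw [cellSupport_cellOn b (mem_powerset.1 hE), theta_cellOn b p subset_rfl]

lemma sum_marginal_mul_theta (p : (∀ γ, I γ) → ℝ) (n : (∀ γ, I γ) → ℝ) :
    ∑ j : ∀ γ, I γ, (∑ g ∈ univ.filter (fun g : ∀ γ, I γ => ∀ γ ∈ cellSupport b j, g γ = j γ),
        n g) * theta b p (cellSupport b j) j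
      = ∑ g : ∀ γ, I γ, n g * Real.log (p g) := by
  simp_rw [sum_mul, sum_filter]
  rw [sum_comm]
  refine sum_congr rfl fun g _ => ?_
  rw [← sum_theta_cellSupport_of_agree b p g, sum_filter, mul_sum]
  simp [mul_ite]

lemma sum_fiberwise_cellSupport {M : Type*} [AddCommMonoid M]
    (f : Finset V → (∀ γ, I γ) → M) :
    ∑ E ∈ (univ : Finset V).powerset.filter (· ≠ ∅),
      ∑ j ∈ univ.filter (fun j : ∀ γ, I γ => cellSupport b j = E), f E j
      = ∑ j ∈ univ.erase b, f (cellSupport b j) j := by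
  have hmaps : ∀ j ∈ univ.erase b,
      cellSupport b j ∈ (univ : Finset V).powerset.filter (· ≠ ∅) := fun j hj => by
    simpa [cellSupport_eq_empty_iff] using ne_of_mem_erase hj
  rw [← sum_fiberwise_of_maps_to hmaps]
  refine sum_congr rfl fun E hE => (sum_congr ?_ fun j hj => ?_).symm
  · ext j
    simp only [mem_filter, mem_univ, true_and, mem_erase, and_true, and_iff_right_iff_imp]
    rintro rfl rfl
    simp [cellSupport_eq_empty_iff] at hE
  · rw [(mem_filter.1 hj).2]

lemma one_add_sum_exp_sum_theta (p : (∀ γ, I γ) → ℝ) (hp : ∀ i, 0 < p i)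
    (hsum : ∑ i, p i = 1) :
    1 + ∑ j ∈ univ.erase b,
      Real.exp (∑ F ∈ (cellSupport b j).powerset.filter (· ≠ ∅), theta b p F j) = (p b)⁻¹ := by
  have hexp (j : ∀ γ, I γ) :
      Real.exp (∑ F ∈ (cellSupport b j).powerset.filter (· ≠ ∅), theta b p F j) = p j / p b := by
    rw [sum_nonempty_theta_cellSupport, Real.exp_sub, Real.exp_log (hp j), Real.exp_log (hp b)]
  calc 1 + ∑ j ∈ univ.erase b,
        Real.exp (∑ F ∈ (cellSupport b j).powerset.filter (· ≠ ∅), theta b p F j)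
      = p b / p b + ∑ j ∈ univ.erase b, p j / p b := by
        rw [div_self (hp b).ne', sum_congr rfl fun j _ => hexp j]
    _ = (p b)⁻¹ := by
        rw [add_sum_erase univ (fun j => p j / p b) (mem_univ b), ← sum_div, hsum, one_div]

lemma sum_erase_marginal_mul_theta (p : (∀ γ, I γ) → ℝ) (n : (∀ γ, I γ) → ℝ) :
    ∑ j ∈ univ.erase b,
      (∑ g ∈ univ.filter (fun g : ∀ γ, I γ => ∀ γ ∈ cellSupport b j, g γ = j γ), n g)
        * theta b p (cellSupport b j) j
      = ∑ i, n i * Real.log (p i) - (∑ i, n i) * Real.log (p b) := by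
  rw [← sum_marginal_mul_theta b p n, ← add_sum_erase _ _ (mem_univ b),
    (cellSupport_eq_empty_iff b).2 rfl, theta_empty]
  simp only [notMem_empty, IsEmpty.forall_iff, implies_true, filter_true]
  ring

end Cells

/-- A tuple `i_E ∈ I_E*` is represented by the unique cell whose support is exactly `E`. -/
theorem multinomial_expFamily_form {V : Type} [Fintype V] [DecidableEq V]
    {I : V → Type} [∀ γ, Fintype (I γ)] [∀ γ, DecidableEq (I γ)]
    (b : ∀ γ, I γ) (p : (∀ γ, I γ) → ℝ) (hp : ∀ i, 0 < p i)
    (hsum : ∑ i : (∀ γ, I γ), p i = 1) (n : (∀ γ, I γ) → ℕ) :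
    ∏ i : (∀ γ, I γ), p i ^ n i =
      Real.exp (
        (∑ E ∈ (Finset.univ : Finset V).powerset.filter (· ≠ ∅),
          ∑ j ∈ Finset.univ.filter (fun j : (∀ γ, I γ) => cellSupport b j = E),
            ((∑ g ∈ Finset.univ.filter (fun g : (∀ γ, I γ) => ∀ γ ∈ E, g γ = j γ), n g : ℕ) : ℝ)
              * theta b p E j)
        - ((∑ i : (∀ γ, I γ), n i : ℕ) : ℝ) *
            Real.log (1 + ∑ E ∈ (Finset.univ : Finset V).powerset.filter (· ≠ ∅),
              ∑ j ∈ Finset.univ.filter (fun j : (∀ γ, I γ) => cellSupport b j = E),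
                Real.exp (∑ F ∈ E.powerset.filter (· ≠ ∅), theta b p F j))) := by
  have hkernel : ∏ i, p i ^ n i = Real.exp (∑ i, (n i : ℝ) * Real.log (p i)) := by
    rw [Real.exp_sum]
    exact prod_congr rfl fun i _ => by rw [Real.exp_nat_mul, Real.exp_log (hp i)]
  rw [sum_fiberwise_cellSupport b
      (fun E j => Real.exp (∑ F ∈ E.powerset.filter (· ≠ ∅), theta b p F j)),
    sum_fiberwise_cellSupport b, one_add_sum_exp_sum_theta b p hp hsum, Real.log_inv]
  push_cast
  rw [sum_erase_marginal_mul_theta, hkernel]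
  congr 1
  ring
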